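/- arXiv:2101.04647 — 2 statements merged into one kernel-verified Lean document; each statement's English description precedes it below -/
import Mathlib

section
/- A function φ lies in the kernel of the turning operator L if and only if φ(w) = c · q(w)/μ(w) for some constant c; in particular ker(L) is one-dimensional, spanned by T(w) = q(w)/(C μ(w)) with C = ∫_V q/μ dw. -/
open MeasureTheory

/-!
Writing `I = ∫ μ φ`, the equation `L φ = 0` says `μ φ = I q` pointwise, so `μ φ` is a multiple of
`q`. Conversely, if `μ φ = a q` then integrating and using `∫ q = 1` gives `I = a`, hence `L φ = 0`.
Since `μ` and `C` do not vanish, `μ φ = a q` is the same as `φ = (a C) · q / (C μ)`.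
-/

theorem exists_mul_eq_const_mul_iff {V : Type*} {q μ φ : V → ℝ} {C : ℝ} (hC : C ≠ 0)
    (hμ : ∀ w, μ w ≠ 0) :
    (∃ a : ℝ, ∀ w, μ w * φ w = a * q w) ↔ ∃ c : ℝ, ∀ w, φ w = c * (q w / (C * μ w)) := by
  have key : ∀ a w, μ w * φ w = a * q w ↔ φ w = a * C * (q w / (C * μ w)) := fun a w => by
    rw [mul_comm (μ w), ← eq_div_iff (hμ w)]
    field_simp
  constructor
  · rintro ⟨a, ha⟩
    exact ⟨a * C, fun w => (key a w).1 (ha w)⟩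
  · rintro ⟨c, hc⟩
    refine ⟨c / C, fun w => (key _ w).2 ?_⟩
    rw [div_mul_cancel₀ c hC, hc w]

section TurningOperator

variable {V : Type*} [MeasurableSpace V] (ν : Measure V)

noncomputable def turningOperator (q μ φ : V → ℝ) : V → ℝ :=
  fun w => -(μ w * φ w) + q w * ∫ w', μ w' * φ w' ∂ν

variable {ν} {q μ φ : V → ℝ}

theorem integral_mul_eq_of_mul_eq_const_mul (hq_norm : ∫ w, q w ∂ν = 1) {a : ℝ}
    (h : ∀ w, μ w * φ w = a * q w) : ∫ w, μ w * φ w ∂ν = a := by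
  simp_rw [h, integral_const_mul, hq_norm, mul_one]

theorem turningOperator_eq_zero_iff (hq_norm : ∫ w, q w ∂ν = 1) :
    (∀ w, turningOperator ν q μ φ w = 0) ↔ ∃ a : ℝ, ∀ w, μ w * φ w = a * q w := by
  constructor
  · intro h
    refine ⟨∫ w', μ w' * φ w' ∂ν, fun w => ?_⟩
    have hw := h w
    rw [turningOperator] at hw
    linarith
  · rintro ⟨a, ha⟩ w
    rw [turningOperator, integral_mul_eq_of_mul_eq_const_mul hq_norm ha, ha w]
    ring

end TurningOperator

theorem kernel_of_turning_operator_general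
    {V : Type*} [MeasurableSpace V] (ν : Measure V)
    (q μ φ : V → ℝ)
    (hq_norm : ∫ w, q w ∂ν = 1)
    (hμ_pos : ∀ w, 0 < μ w)
    (C : ℝ) (hC_pos : 0 < C) :
    (∀ w, -(μ w * φ w) + q w * (∫ w', μ w' * φ w' ∂ν) = 0)
      ↔ ∃ c : ℝ, ∀ w, φ w = c * (q w / (C * μ w)) :=
  (turningOperator_eq_zero_iff hq_norm).trans
    (exists_mul_eq_const_mul_iff hC_pos.ne' fun w => (hμ_pos w).ne')

/-- A function `φ` lies in the kernel of the turning operator `L` if and only if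
`φ(w) = c · q(w)/(C μ(w))` for some constant `c`; i.e. `ker L` is spanned by
`T(w) = q(w)/(C μ(w))` with `C = ∫_V q/μ dw`. -/
theorem kernel_of_turning_operator
    {V : Type*} [MeasurableSpace V] (ν : Measure V)
    (q μ φ : V → ℝ)
    (hq_pos : ∀ w, 0 < q w) (hq_int : Integrable q ν)
    (hq_norm : ∫ w, q w ∂ν = 1)
    (hμ_pos : ∀ w, 0 < μ w)
    (hqμ_int : Integrable (fun w => q w / μ w) ν)
    (C : ℝ) (hC : C = ∫ w, q w / μ w ∂ν) (hC_pos : 0 < C)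
    (hμφ_int : Integrable (fun w => μ w * φ w) ν) :
    (∀ w, -(μ w * φ w) + q w * (∫ w', μ w' * φ w' ∂ν) = 0)
      ↔ ∃ c : ℝ, ∀ w, φ w = c * (q w / (C * μ w)) :=
  kernel_of_turning_operator_general ν q μ φ hq_norm hμ_pos C hC_pos
end

section
/- If q(w) is proportional to μ(w)² (i.e., q = c μ² with c > 0), then the macroscopic diffusion tensor D = ∫_V w ⊗ w · T(w)/μ(w) dw is a scalar multiple of the identity matrix, provided V = s S^{d-1} is a sphere of radius s. -/
/-!
Since `q = c μ²`, the weight `T / μ = c / C` is constant, so `D` is a multiple of the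
second-moment matrix `∫ w ⊗ w dν`. Invariance of `ν` under the reflection in a coordinate
hyperplane kills the off-diagonal entries, and invariance under swapping two coordinates makes
the diagonal entries equal.
-/

open MeasureTheory

namespace EuclideanSpace

variable {ι : Type*} [Fintype ι] {ν : Measure (EuclideanSpace ℝ ι)}

noncomputable def secondMoment (ν : Measure (EuclideanSpace ℝ ι)) : Matrix ι ι ℝ :=
  Matrix.of fun i j => ∫ w, w i * w j ∂ν

theorem integral_comp_linearIsometryEquiv
    (O : EuclideanSpace ℝ ι ≃ₗᵢ[ℝ] EuclideanSpace ℝ ι) (hO : ν.map O = ν)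
    (f : EuclideanSpace ℝ ι → ℝ) :
    ∫ w, f (O w) ∂ν = ∫ w, f w ∂ν := by
  conv_rhs => rw [← hO]
  exact (integral_map_equiv O.toMeasurableEquiv f).symm

variable [DecidableEq ι]

noncomputable def negCoord (i : ι) : EuclideanSpace ℝ ι ≃ₗᵢ[ℝ] EuclideanSpace ℝ ι :=
  LinearIsometryEquiv.piLpCongrRight 2
    fun k => if k = i then LinearIsometryEquiv.neg ℝ else LinearIsometryEquiv.refl ℝ ℝ

theorem negCoord_apply (i k : ι) (w : EuclideanSpace ℝ ι) :
    negCoord i w k = if k = i then -w k else w k := by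
  by_cases h : k = i <;> simp [negCoord, LinearIsometryEquiv.piLpCongrRight_apply, h]

variable (hν : ∀ O : EuclideanSpace ℝ ι ≃ₗᵢ[ℝ] EuclideanSpace ℝ ι, ν.map O = ν)
include hν

theorem secondMoment_apply_of_ne {i j : ι} (hij : i ≠ j) : secondMoment ν i j = 0 := by
  have h := integral_comp_linearIsometryEquiv (negCoord i) (hν _) fun w => w i * w j
  simp only [negCoord_apply, if_true, if_neg hij.symm, neg_mul, integral_neg] at h
  simp only [secondMoment, Matrix.of_apply]
  linarith

theorem secondMoment_apply_self_eq (i j : ι) : secondMoment ν i i = secondMoment ν j j := by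
  have h := integral_comp_linearIsometryEquiv
    (LinearIsometryEquiv.piLpCongrLeft 2 ℝ ℝ (Equiv.swap i j)) (hν _) fun w => w i * w i
  simp only [LinearIsometryEquiv.piLpCongrLeft_apply, Equiv.piCongrLeft'_apply,
    Equiv.symm_swap, Equiv.swap_apply_left] at h
  simpa [secondMoment] using h.symm

theorem exists_secondMoment_eq_smul_one : ∃ a : ℝ, secondMoment ν = a • 1 := by
  cases isEmpty_or_nonempty ι with
  | inl _ => exact ⟨0, Subsingleton.elim _ _⟩
  | inr h =>
    obtain ⟨i₀⟩ := h
    refine ⟨secondMoment ν i₀ i₀, Matrix.ext fun i j => ?_⟩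
    rcases eq_or_ne i j with rfl | hij
    · simp [secondMoment_apply_self_eq hν i i₀]
    · simp [secondMoment_apply_of_ne hν hij, hij]

end EuclideanSpace

theorem diffusion_tensor_isotropic_of_q_eq_mu_sq_general
    {d : ℕ}
    (ν : Measure (EuclideanSpace ℝ (Fin d)))
    -- ν is the uniform surface measure on the sphere of radius s:
    -- it is supported on the sphere and invariant under all linear isometries.
    (hrot : ∀ O : EuclideanSpace ℝ (Fin d) ≃ₗᵢ[ℝ] EuclideanSpace ℝ (Fin d),
      ν.map O = ν)
    (μ q : EuclideanSpace ℝ (Fin d) → ℝ)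
    (hμ_pos : ∀ w, 0 < μ w)
    (c : ℝ) (hq : ∀ w, q w = c * (μ w)^2)
    (C : ℝ)
    (T : EuclideanSpace ℝ (Fin d) → ℝ) (hT : ∀ w, T w = q w / (C * μ w))
    (D : Matrix (Fin d) (Fin d) ℝ)
    (hD : ∀ i j, D i j = ∫ w, w i * w j * (T w / μ w) ∂ν) :
    ∃ a : ℝ, D = a • (1 : Matrix (Fin d) (Fin d) ℝ) := by
  have hTμ : ∀ w, T w / μ w = c / C := fun w => by
    have := (hμ_pos w).ne'
    rw [hT, hq]
    field_simp
  have hD_eq : D = (c / C) • EuclideanSpace.secondMoment ν := by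
    ext i j
    simp only [hD, hTμ, EuclideanSpace.secondMoment, Matrix.smul_apply, Matrix.of_apply,
      smul_eq_mul, integral_mul_const]
    ring
  obtain ⟨a, ha⟩ := EuclideanSpace.exists_secondMoment_eq_smul_one hrot
  exact ⟨c / C * a, by rw [hD_eq, ha, smul_smul]⟩

/-- If `q(w) = c μ(w)²`, the macroscopic diffusion tensor
`D = ∫_V w ⊗ w · T(w)/μ(w) dw` is a scalar multiple of the identity matrix,
where `V = s·S^{d-1}` carries its (rotation-invariant) uniform surface measure. -/
theorem diffusion_tensor_isotropic_of_q_eq_mu_sq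
    {d : ℕ} (s : ℝ) (hs : 0 < s)
    (ν : Measure (EuclideanSpace ℝ (Fin d)))
    -- ν is the uniform surface measure on the sphere of radius s:
    -- it is supported on the sphere and invariant under all linear isometries.
    (hsupp : ∀ᵐ w ∂ν, ‖w‖ = s)
    (hrot : ∀ O : EuclideanSpace ℝ (Fin d) ≃ₗᵢ[ℝ] EuclideanSpace ℝ (Fin d),
      ν.map O = ν)
    (μ q : EuclideanSpace ℝ (Fin d) → ℝ)
    (hμ_pos : ∀ w, 0 < μ w) (hμ_cont : Continuous μ)
    (c : ℝ) (hc : 0 < c) (hq : ∀ w, q w = c * (μ w)^2)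
    (hq_norm : ∫ w, q w ∂ν = 1)
    (C : ℝ) (hC : C = ∫ w, q w / μ w ∂ν) (hC_pos : 0 < C)
    (T : EuclideanSpace ℝ (Fin d) → ℝ) (hT : ∀ w, T w = q w / (C * μ w))
    (D : Matrix (Fin d) (Fin d) ℝ)
    (hD : ∀ i j, D i j = ∫ w, w i * w j * (T w / μ w) ∂ν) :
    ∃ a : ℝ, D = a • (1 : Matrix (Fin d) (Fin d) ℝ) :=
  diffusion_tensor_isotropic_of_q_eq_mu_sq_general ν hrot μ q hμ_pos c hq C T hT D hD
end
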